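/- Let R be a reduced crystallographic root system with set of positive roots R⁺ and simple roots S, and let I be a proper subset of S. For every positive root β in R⁺ \ R_I⁺ one has ⟨2ρ^P − ρ − Σ_{α ∈ S\I} ϖ_α , β∨⟩ ≥ 0. -/

import Mathlib

/-!
Common setup: a reduced crystallographic root system realized in a real inner
product space, together with a chosen set of simple roots.  For a root `α`,
`cpair v α = ⟨v, α∨⟩ = 2⟪v,α⟫/⟪α,α⟫` is the pairing with the coroot `α∨`, and
`sref α` is the reflection in `α`.
-/

open scoped RealInnerProductSpace
open Finset

/-- `cpair v α = ⟨v, α∨⟩ = 2⟪v,α⟫/⟪α,α⟫`, the pairing of `v` with the coroot of `α`. -/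
noncomputable def cpair {V : Type*} [NormedAddCommGroup V] [InnerProductSpace ℝ V]
    (v α : V) : ℝ := 2 * ⟪v, α⟫ / ⟪α, α⟫

/-- The reflection in the root `α`: `v ↦ v - ⟨v, α∨⟩ α`. -/
noncomputable def sref {V : Type*} [NormedAddCommGroup V] [InnerProductSpace ℝ V]
    (α : V) : V → V := fun v => v - cpair v α • α

/-- A reduced crystallographic root system in a real inner product space,
with a chosen set of simple roots (every root is an integral linear combination
of the simple roots, with coefficients all nonnegative or all nonpositive). -/
structure RCRS (V : Type*) [NormedAddCommGroup V] [InnerProductSpace ℝ V] where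
  roots : Finset V
  zero_not_mem : (0 : V) ∉ roots
  crystallographic : ∀ α ∈ roots, ∀ β ∈ roots, ∃ n : ℤ, cpair β α = (n : ℝ)
  reflect_mem : ∀ α ∈ roots, ∀ β ∈ roots, sref α β ∈ roots
  reduced : ∀ α ∈ roots, ∀ t : ℝ, t • α ∈ roots → t = 1 ∨ t = -1
  simple : Finset V
  simple_subset : simple ⊆ roots
  simple_indep : LinearIndependent ℝ ((↑) : simple → V)
  exists_coeffs : ∀ β ∈ roots, ∃ c : V → ℤ,
    ((∀ α ∈ simple, 0 ≤ c α) ∨ (∀ α ∈ simple, c α ≤ 0)) ∧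
    β = ∑ α ∈ simple, (c α : ℝ) • α

namespace RCRS

variable {V : Type*} [NormedAddCommGroup V] [InnerProductSpace ℝ V] [DecidableEq V] (Φ : RCRS V)

open Classical in
/-- `R⁺`: the set of positive roots, i.e. the roots that are nonnegative integral
linear combinations of simple roots. -/
noncomputable def posRoots : Finset V :=
  Φ.roots.filter (fun β => ∃ c : V → ℤ, (∀ α ∈ Φ.simple, 0 ≤ c α) ∧
    β = ∑ α ∈ Φ.simple, (c α : ℝ) • α)

open Classical in
/-- `R_I⁺`: the set of positive roots that are integral linear combinations of the
simple roots belonging to `I`. -/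
noncomputable def posRootsOf (I : Finset V) : Finset V :=
  Φ.posRoots.filter (fun β => ∃ c : V → ℤ, β = ∑ α ∈ I, (c α : ℝ) • α)

/-- `ρ`: the half sum of the positive roots. -/
noncomputable def rho : V := (2 : ℝ)⁻¹ • ∑ β ∈ Φ.posRoots, β

/-- `ρ^P`: the half sum of the positive roots that are not in `R_I⁺`. -/
noncomputable def rhoP (I : Finset V) : V :=
  (2 : ℝ)⁻¹ • ∑ β ∈ Φ.posRoots \ Φ.posRootsOf I, β

/-- `ϖ` is a system of fundamental weights: `⟨ϖ α, β∨⟩ = δ_{α β}` for simple `α`, `β`. -/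
def IsFundamentalWeights (ϖ : V → V) : Prop :=
  ∀ α ∈ Φ.simple, ∀ β ∈ Φ.simple, cpair (ϖ α) β = if α = β then 1 else 0

/-- The product of the reflections in the roots listed in `l`
(`wordProd [α₁, …, α_N] = s_{α₁} ∘ ⋯ ∘ s_{α_N}`). -/
noncomputable def wordProd : List V → (V → V) :=
  fun l => l.foldr (fun α f => sref α ∘ f) id

/-- Membership in the subgroup of the Weyl group generated by the reflections
`s_α`, `α ∈ I`. -/
def MemWeyl (I : Finset V) (w : V → V) : Prop :=
  ∃ l : List V, (∀ α ∈ l, α ∈ I) ∧ w = wordProd l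

/-- The length of `w` with respect to the generators `s_α`, `α ∈ I`. -/
noncomputable def lengthWeyl (I : Finset V) (w : V → V) : ℕ :=
  sInf {n | ∃ l : List V, l.length = n ∧ (∀ α ∈ l, α ∈ I) ∧ w = wordProd l}

/-- `w` is the longest element of the subgroup generated by the reflections
`s_α`, `α ∈ I`. -/
def IsLongest (I : Finset V) (w : V → V) : Prop :=
  MemWeyl I w ∧ ∀ u, MemWeyl I u → lengthWeyl I u ≤ lengthWeyl I w

end RCRS


/-!
Let `w` be an element of the parabolic subgroup `W_I` sending every root of `R_I⁺` to a negative
root (the longest element of `W_I`; it is found as an element keeping the fewest roots of `R_I⁺`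
positive). Being a product of reflections in simple roots of `I`, `w` permutes `R⁺ \ R_I⁺` and
fixes `ϖ_α` for `α ∉ I`, while it maps `R_I⁺` onto `-R_I⁺`. As `2ρ^P − ρ = ρ^P − ρ_I`, this gives
`w (2ρ^P − ρ − Σ_{α ∈ S\I} ϖ_α) = ρ − Σ_{α ∈ S\I} ϖ_α`, which pairs to `0` or `1` with every simple
coroot, hence nonnegatively with every positive coroot. Since `w` is an isometry and `wβ ∈ R⁺`,
`⟨2ρ^P − ρ − Σ ϖ_α, β∨⟩ = ⟨ρ − Σ ϖ_α, (wβ)∨⟩ ≥ 0`.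
-/

section Reflection

variable {V : Type*} [NormedAddCommGroup V] [InnerProductSpace ℝ V]

lemma cpair_add_left (u v α : V) : cpair (u + v) α = cpair u α + cpair v α := by
  simp only [cpair, inner_add_left]; ring

lemma cpair_sub_left (u v α : V) : cpair (u - v) α = cpair u α - cpair v α := by
  simp only [cpair, inner_sub_left]; ring

lemma cpair_smul_left (a : ℝ) (v α : V) : cpair (a • v) α = a * cpair v α := by
  simp only [cpair, real_inner_smul_left]; ring

lemma cpair_sum_left {ι : Type*} (s : Finset ι) (f : ι → V) (α : V) :
    cpair (∑ i ∈ s, f i) α = ∑ i ∈ s, cpair (f i) α := by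
  simp only [cpair, sum_inner, Finset.mul_sum, Finset.sum_div]

lemma cpair_self {α : V} (hα : α ≠ 0) : cpair α α = 2 := by
  rw [cpair, mul_div_assoc, div_self (inner_self_ne_zero.mpr hα), mul_one]

lemma cpair_nonneg_iff {α : V} (hα : α ≠ 0) (v : V) : 0 ≤ cpair v α ↔ 0 ≤ ⟪v, α⟫ := by
  rw [cpair, le_div_iff₀ (real_inner_self_pos.mpr hα)]
  constructor <;> intro h <;> linarith

lemma cpair_pos_iff {α : V} (hα : α ≠ 0) (v : V) : 0 < cpair v α ↔ 0 < ⟪v, α⟫ := by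
  rw [cpair, lt_div_iff₀ (real_inner_self_pos.mpr hα)]
  constructor <;> intro h <;> linarith

lemma cpair_map {W : Type*} [NormedAddCommGroup W] [InnerProductSpace ℝ W] (e : V →ₗᵢ[ℝ] W)
    (v α : V) : cpair (e v) (e α) = cpair v α := by
  simp only [cpair, e.inner_map_map]

lemma sref_self {α : V} (hα : α ≠ 0) : sref α α = -α := by
  rw [sref, cpair_self hα]; module

lemma cpair_sref_self {α : V} (hα : α ≠ 0) (v : V) : cpair (sref α v) α = -cpair v α := by
  rw [sref, cpair_sub_left, cpair_smul_left, cpair_self hα]; ring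

lemma sref_sref (α v : V) : sref α (sref α v) = v := by
  rcases eq_or_ne α 0 with rfl | hα
  · simp [sref]
  rw [sref, cpair_sref_self hα, sref]; module

lemma inner_sref_sref (α u v : V) : ⟪sref α u, sref α v⟫ = ⟪u, v⟫ := by
  rcases eq_or_ne α 0 with rfl | hα
  · simp [sref]
  have hαα : ⟪α, α⟫ ≠ 0 := inner_self_ne_zero.mpr hα
  simp only [sref, cpair, inner_sub_left, inner_sub_right, real_inner_smul_left,
    real_inner_smul_right, real_inner_comm α u, real_inner_comm v α]
  field_simp
  ring

noncomputable def srefEquiv (α : V) : V ≃ₗᵢ[ℝ] V :=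
  LinearEquiv.isometryOfInner
    { toFun := sref α
      invFun := sref α
      map_add' := fun u v => by simp only [sref, cpair_add_left, add_smul]; abel
      map_smul' := fun a v => by
        simp only [sref, cpair_smul_left, mul_smul, smul_sub, RingHom.id_apply]
      left_inv := sref_sref α
      right_inv := sref_sref α }
    (inner_sref_sref α)

@[simp] lemma coe_srefEquiv (α : V) : ⇑(srefEquiv α) = sref α := rfl

/-- The parabolic subgroup `W_I`: its generators are involutions, so the submonoid they generate
is already a group. -/
def reflectionMonoid (I : Finset V) : Submonoid (V ≃ₗᵢ[ℝ] V) :=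
  Submonoid.closure (srefEquiv '' I)

lemma mapsTo_of_mem_reflectionMonoid {I : Finset V} {s : Set V}
    (hs : ∀ α ∈ I, Set.MapsTo (sref α) s s) {w : V ≃ₗᵢ[ℝ] V} (hw : w ∈ reflectionMonoid I) :
    Set.MapsTo w s s := by
  induction hw using Submonoid.closure_induction with
  | mem _ h => obtain ⟨α, hα, rfl⟩ := h; exact hs α hα
  | one => exact Set.mapsTo_id s
  | mul _ _ _ _ h₁ h₂ => exact h₁.comp h₂

end Reflection

lemma Finset.sum_comp_of_mapsTo_of_injOn {ι M : Type*} [AddCommMonoid M] {s : Finset ι}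
    {φ : ι → ι} (hmaps : Set.MapsTo φ s s) (hinj : Set.InjOn φ s) (f : ι → M) :
    ∑ x ∈ s, f (φ x) = ∑ x ∈ s, f x :=
  Finset.sum_nbij φ hmaps hinj
    ((s.finite_toSet.injOn_iff_bijOn_of_mapsTo hmaps).mp hinj).surjOn fun _ _ => rfl

namespace RCRS

variable {V : Type*} [NormedAddCommGroup V] [InnerProductSpace ℝ V] (Φ : RCRS V)

lemma root_ne_zero {β : V} (hβ : β ∈ Φ.roots) : β ≠ 0 :=
  fun h => Φ.zero_not_mem (h ▸ hβ)

lemma neg_mem_roots {β : V} (hβ : β ∈ Φ.roots) : -β ∈ Φ.roots := by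
  simpa [sref_self (Φ.root_ne_zero hβ)] using Φ.reflect_mem β hβ β hβ

lemma coeff_eq_of_sum_smul_eq {f g : V → ℝ}
    (h : ∑ α ∈ Φ.simple, f α • α = ∑ α ∈ Φ.simple, g α • α) {α : V} (hα : α ∈ Φ.simple) :
    f α = g α :=
  linearIndepOn_finset_iffₛ.mp (linearIndependent_subtype_iff.mp Φ.simple_indep) f g h α hα

lemma sref_mem_span_iff {I : Finset V} {α v : V} (hα : α ∈ I) (hαr : α ∈ Φ.roots)
    (hv : v ∈ Φ.roots) :
    sref α v ∈ Submodule.span ℤ (I : Set V) ↔ v ∈ Submodule.span ℤ (I : Set V) := by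
  obtain ⟨n, hn⟩ := Φ.crystallographic α hαr v hv
  rw [sref, hn, Int.cast_smul_eq_zsmul]
  exact Submodule.sub_mem_iff_left _ (Submodule.smul_mem _ n (Submodule.subset_span hα))

lemma mem_posRoots {β : V} : β ∈ Φ.posRoots ↔ β ∈ Φ.roots ∧ ∃ c : V → ℤ,
    (∀ α ∈ Φ.simple, 0 ≤ c α) ∧ β = ∑ α ∈ Φ.simple, (c α : ℝ) • α := by
  classical
  simp [posRoots]

lemma mem_posRootsOf {I : Finset V} {β : V} :
    β ∈ Φ.posRootsOf I ↔ β ∈ Φ.posRoots ∧ β ∈ Submodule.span ℤ (I : Set V) := by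
  classical
  simp only [posRootsOf, mem_filter, Submodule.mem_span_finset, Int.cast_smul_eq_zsmul]
  constructor
  · rintro ⟨hβ, c, rfl⟩
    exact ⟨hβ, fun α => if α ∈ I then c α else 0,
      fun α h => (show α ∈ I ∧ c α ≠ 0 by simpa using h).1,
      sum_congr rfl fun α hα => by simp [hα]⟩
  · rintro ⟨hβ, c, -, rfl⟩
    exact ⟨hβ, c, rfl⟩

lemma mem_posRoots_sdiff_posRootsOf [DecidableEq V] {I : Finset V} {β : V} :
    β ∈ Φ.posRoots \ Φ.posRootsOf I ↔
      β ∈ Φ.posRoots ∧ β ∉ Submodule.span ℤ (I : Set V) := by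
  simp +contextual [mem_posRootsOf]

lemma posRoots_subset : Φ.posRoots ⊆ Φ.roots := fun _ hβ => (Φ.mem_posRoots.mp hβ).1

lemma posRootsOf_subset (I : Finset V) : Φ.posRootsOf I ⊆ Φ.posRoots :=
  fun _ hβ => (Φ.mem_posRootsOf.mp hβ).1

lemma mem_posRoots_or_neg_mem {β : V} (hβ : β ∈ Φ.roots) :
    β ∈ Φ.posRoots ∨ -β ∈ Φ.posRoots := by
  obtain ⟨c, hc | hc, rfl⟩ := Φ.exists_coeffs β hβ
  · exact .inl (Φ.mem_posRoots.mpr ⟨hβ, c, hc, rfl⟩)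
  · refine .inr (Φ.mem_posRoots.mpr ⟨Φ.neg_mem_roots hβ, -c, fun α hα => ?_, ?_⟩)
    · simpa using hc α hα
    · simp [neg_smul]

lemma neg_not_mem_posRoots {β : V} (hβ : β ∈ Φ.posRoots) : -β ∉ Φ.posRoots := by
  intro hneg
  obtain ⟨hβr, c, hc, hβc⟩ := Φ.mem_posRoots.mp hβ
  obtain ⟨-, d, hd, hβd⟩ := Φ.mem_posRoots.mp hneg
  have hcd : ∀ α ∈ Φ.simple, (c α : ℝ) = -d α := fun α hα =>
    Φ.coeff_eq_of_sum_smul_eq (f := fun α => (c α : ℝ)) (g := fun α => -(d α : ℝ))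
      (by simp only [neg_smul, sum_neg_distrib, ← hβc, ← hβd, neg_neg]) hα
  refine Φ.root_ne_zero hβr (hβc ▸ sum_eq_zero fun α hα => ?_)
  have h₁ : (0 : ℝ) ≤ c α := by exact_mod_cast hc α hα
  have h₂ : (0 : ℝ) ≤ d α := by exact_mod_cast hd α hα
  rw [show (c α : ℝ) = 0 by linarith [hcd α hα], zero_smul]

lemma simple_mem_posRoots {α : V} (hα : α ∈ Φ.simple) : α ∈ Φ.posRoots := by
  classical
  exact Φ.mem_posRoots.mpr ⟨Φ.simple_subset hα, fun γ => if γ = α then 1 else 0,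
    fun γ _ => by dsimp only; split_ifs <;> norm_num, by simp [ite_smul, hα]⟩

lemma simple_mem_posRootsOf {I : Finset V} (hI : I ⊆ Φ.simple) {α : V} (hα : α ∈ I) :
    α ∈ Φ.posRootsOf I :=
  Φ.mem_posRootsOf.mpr ⟨Φ.simple_mem_posRoots (hI hα), Submodule.subset_span hα⟩

lemma sref_mem_posRoots {α β : V} (hα : α ∈ Φ.simple) (hβ : β ∈ Φ.posRoots) (hne : β ≠ α) :
    sref α β ∈ Φ.posRoots := by
  classical
  obtain ⟨hβr, c, hc, rfl⟩ := Φ.mem_posRoots.mp hβ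
  have hαr := Φ.simple_subset hα
  -- by reducedness `β` has a positive coefficient at a simple root `γ ≠ α`,
  -- and `sref α` only changes the coefficient at `α`
  obtain ⟨γ, hγ, hγα, hcγ⟩ : ∃ γ ∈ Φ.simple, γ ≠ α ∧ 0 < c γ := by
    by_contra! h
    have hβα : ∑ γ ∈ Φ.simple, (c γ : ℝ) • γ = (c α : ℝ) • α :=
      sum_eq_single_of_mem α hα fun γ hγ hγα => by simp [le_antisymm (h γ hγ hγα) (hc γ hγ)]
    rcases Φ.reduced α hαr _ (hβα ▸ hβr) with h1 | h1
    · exact hne (by rw [hβα, h1, one_smul])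
    · have : (0 : ℝ) ≤ c α := by exact_mod_cast hc α hα
      linarith
  obtain ⟨n, hn⟩ := Φ.crystallographic α hαr _ hβr
  have hsr := Φ.reflect_mem α hαr _ hβr
  obtain ⟨d, hd | hd, hdsum⟩ := Φ.exists_coeffs _ hsr
  · exact Φ.mem_posRoots.mpr ⟨hsr, d, hd, hdsum⟩
  have hdc : (d γ : ℝ) = c γ - if γ = α then (n : ℝ) else 0 :=
    Φ.coeff_eq_of_sum_smul_eq (f := fun μ => (d μ : ℝ))
      (g := fun μ => c μ - if μ = α then (n : ℝ) else 0)
      (by simp [← hdsum, sref, hn, sub_smul, sum_sub_distrib, ite_smul, hα]) hγ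
  have : (d γ : ℝ) ≤ 0 := by exact_mod_cast hd γ hγ
  have : (0 : ℝ) < c γ := by exact_mod_cast hcγ
  simp only [hγα, if_false, sub_zero] at hdc
  linarith

lemma sref_ne_of_mem_posRoots {α β : V} (hα : α ∈ Φ.simple) (hβ : β ∈ Φ.posRoots) :
    sref α β ≠ α := by
  intro h
  have : β = -α := by
    rw [← sref_sref α β, h, sref_self (Φ.root_ne_zero (Φ.simple_subset hα))]
  exact Φ.neg_not_mem_posRoots (Φ.simple_mem_posRoots hα) (this ▸ hβ)

lemma cpair_sum_posRoots {α : V} (hα : α ∈ Φ.simple) : cpair (∑ β ∈ Φ.posRoots, β) α = 2 := by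
  classical
  have hα0 := Φ.root_ne_zero (Φ.simple_subset hα)
  have hmaps : Set.MapsTo (sref α) (Φ.posRoots.erase α) (Φ.posRoots.erase α) := fun β hβ => by
    obtain ⟨hne, hβ⟩ := mem_erase.mp hβ
    exact mem_erase.mpr ⟨Φ.sref_ne_of_mem_posRoots hα hβ, Φ.sref_mem_posRoots hα hβ hne⟩
  have hperm := sum_comp_of_mapsTo_of_injOn hmaps (srefEquiv α).injective.injOn (cpair · α)
  simp only [cpair_sref_self hα0, sum_neg_distrib] at hperm
  rw [← add_sum_erase _ _ (Φ.simple_mem_posRoots hα), cpair_add_left, cpair_self hα0,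
    cpair_sum_left]
  linarith

lemma cpair_rho {α : V} (hα : α ∈ Φ.simple) : cpair Φ.rho α = 1 := by
  rw [rho, cpair_smul_left, Φ.cpair_sum_posRoots hα]
  norm_num

lemma inner_nonneg_of_mem_posRoots {v : V} (hv : ∀ α ∈ Φ.simple, 0 ≤ ⟪v, α⟫) {β : V}
    (hβ : β ∈ Φ.posRoots) : 0 ≤ ⟪v, β⟫ := by
  obtain ⟨-, c, hc, rfl⟩ := Φ.mem_posRoots.mp hβ
  rw [inner_sum]
  refine sum_nonneg fun α hα => ?_
  rw [real_inner_smul_right]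
  exact mul_nonneg (by exact_mod_cast hc α hα) (hv α hα)

lemma inner_pos_of_mem_posRoots {v : V} (hv : ∀ α ∈ Φ.simple, 0 < ⟪v, α⟫) {β : V}
    (hβ : β ∈ Φ.posRoots) : 0 < ⟪v, β⟫ := by
  obtain ⟨hβr, c, hc, rfl⟩ := Φ.mem_posRoots.mp hβ
  obtain ⟨α, hα, hcα⟩ : ∃ α ∈ Φ.simple, c α ≠ 0 := by
    by_contra! h
    exact Φ.root_ne_zero hβr (sum_eq_zero fun α hα => by simp [h α hα])
  rw [inner_sum]
  refine sum_pos' (fun α hα => ?_) ⟨α, hα, ?_⟩ <;> rw [real_inner_smul_right]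
  · exact mul_nonneg (by exact_mod_cast hc α hα) (hv α hα).le
  · exact mul_pos (by exact_mod_cast (hc α hα).lt_of_ne' hcα) (hv α hα)

lemma inner_rho_pos {β : V} (hβ : β ∈ Φ.posRoots) : 0 < ⟪Φ.rho, β⟫ :=
  Φ.inner_pos_of_mem_posRoots (fun α hα => (cpair_pos_iff (Φ.root_ne_zero (Φ.simple_subset hα))
    _).mp (by rw [Φ.cpair_rho hα]; norm_num)) hβ

lemma inner_rho_neg {β : V} (hβ : β ∈ Φ.roots) (hβ' : β ∉ Φ.posRoots) : ⟪Φ.rho, β⟫ < 0 := by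
  have := Φ.inner_rho_pos ((Φ.mem_posRoots_or_neg_mem hβ).resolve_left hβ')
  rw [inner_neg_right] at this
  linarith

lemma sref_mem_posRootsOf {I : Finset V} (hI : I ⊆ Φ.simple) {α δ : V} (hα : α ∈ I)
    (hδ : δ ∈ Φ.posRootsOf I) (hne : δ ≠ α) : sref α δ ∈ Φ.posRootsOf I := by
  rw [mem_posRootsOf] at hδ ⊢
  exact ⟨Φ.sref_mem_posRoots (hI hα) hδ.1 hne, (Φ.sref_mem_span_iff hα
    (Φ.simple_subset (hI hα)) (Φ.posRoots_subset hδ.1)).mpr hδ.2⟩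

lemma mapsTo_sref_posRoots_sdiff_posRootsOf [DecidableEq V] {I : Finset V} (hI : I ⊆ Φ.simple)
    {α : V} (hα : α ∈ I) :
    Set.MapsTo (sref α) ↑(Φ.posRoots \ Φ.posRootsOf I) ↑(Φ.posRoots \ Φ.posRootsOf I) := by
  intro β hβ
  rw [mem_coe, mem_posRoots_sdiff_posRootsOf] at hβ ⊢
  have hne : β ≠ α := fun h => hβ.2 (h ▸ Submodule.subset_span hα)
  exact ⟨Φ.sref_mem_posRoots (hI hα) hβ.1 hne, (Φ.sref_mem_span_iff hα
    (Φ.simple_subset (hI hα)) (Φ.posRoots_subset hβ.1)).not.mpr hβ.2⟩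

lemma mapsTo_sref_roots_inter_span {I : Finset V} (hI : I ⊆ Φ.simple) {α : V} (hα : α ∈ I) :
    Set.MapsTo (sref α) (↑Φ.roots ∩ Submodule.span ℤ (I : Set V))
      (↑Φ.roots ∩ Submodule.span ℤ (I : Set V)) := fun v ⟨hv, hvI⟩ =>
  have hαr := Φ.simple_subset (hI hα)
  ⟨Φ.reflect_mem α hαr v hv, (Φ.sref_mem_span_iff hα hαr hv).mpr hvI⟩

lemma exists_nonneg_coeffs_of_mem_posRootsOf {I : Finset V} (hI : I ⊆ Φ.simple) {δ : V}
    (hδ : δ ∈ Φ.posRootsOf I) : ∃ d : V → ℝ, (∀ γ ∈ I, 0 ≤ d γ) ∧ δ = ∑ γ ∈ I, d γ • γ := by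
  obtain ⟨hδ, hδI⟩ := Φ.mem_posRootsOf.mp hδ
  obtain ⟨-, c, hc, hδc⟩ := Φ.mem_posRoots.mp hδ
  obtain ⟨e, he, hδe⟩ := Submodule.mem_span_finset.mp hδI
  simp only [← Int.cast_smul_eq_zsmul ℝ] at hδe
  have hδS : δ = ∑ γ ∈ Φ.simple, (e γ : ℝ) • γ := by
    rw [← sum_subset hI fun γ _ hγ => ?_, hδe]
    simp [Function.notMem_support.mp fun h => hγ (he h)]
  refine ⟨fun γ => e γ, fun γ hγ => ?_, hδe.symm⟩
  dsimp only
  rw [← Φ.coeff_eq_of_sum_smul_eq (hδc.symm.trans hδS) (hI hγ)]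
  exact_mod_cast hc γ (hI hγ)

lemma exists_simple_apply_mem_posRoots {I : Finset V} (hI : I ⊆ Φ.simple)
    {w : V ≃ₗᵢ[ℝ] V} (hw : w ∈ reflectionMonoid I) {δ : V} (hδ : δ ∈ Φ.posRootsOf I)
    (hwδ : w δ ∈ Φ.posRoots) : ∃ α ∈ I, w α ∈ Φ.posRoots := by
  by_contra! h
  obtain ⟨d, hd, rfl⟩ := Φ.exists_nonneg_coeffs_of_mem_posRootsOf hI hδ
  have hroots : ∀ γ ∈ I, w γ ∈ Φ.roots := fun γ hγ =>
    (mapsTo_of_mem_reflectionMonoid (fun α hα => Φ.mapsTo_sref_roots_inter_span hI hα) hw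
      ⟨Φ.simple_subset (hI hγ), Submodule.subset_span hγ⟩).1
  have : ⟪Φ.rho, w (∑ γ ∈ I, d γ • γ)⟫ ≤ 0 := by
    rw [map_sum, inner_sum]
    refine sum_nonpos fun γ hγ => ?_
    rw [map_smul, real_inner_smul_right]
    exact mul_nonpos_of_nonneg_of_nonpos (hd γ hγ) (Φ.inner_rho_neg (hroots γ hγ) (h γ hγ)).le
  exact this.not_gt (Φ.inner_rho_pos hwδ)

lemma card_filter_mul_srefEquiv_lt [DecidableEq V] {I : Finset V} (hI : I ⊆ Φ.simple)
    (w : V ≃ₗᵢ[ℝ] V) {α : V} (hα : α ∈ I) (hwα : w α ∈ Φ.posRoots) :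
    #{δ ∈ Φ.posRootsOf I | (w * srefEquiv α) δ ∈ Φ.posRoots} <
      #{δ ∈ Φ.posRootsOf I | w δ ∈ Φ.posRoots} := by
  have hαmem : α ∈ {δ ∈ Φ.posRootsOf I | w δ ∈ Φ.posRoots} :=
    mem_filter.mpr ⟨Φ.simple_mem_posRootsOf hI hα, hwα⟩
  refine (card_le_card_of_injOn (sref α) (fun δ hδ => ?_)
    (srefEquiv α).injective.injOn).trans_lt (card_erase_lt_of_mem hαmem)
  obtain ⟨hδI, hwδ⟩ := mem_filter.mp hδ
  replace hwδ : w (sref α δ) ∈ Φ.posRoots := hwδ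
  have hne : δ ≠ α := by
    rintro rfl
    rw [sref_self (Φ.root_ne_zero (Φ.simple_subset (hI hα))), map_neg] at hwδ
    exact Φ.neg_not_mem_posRoots hwα hwδ
  exact mem_erase.mpr ⟨Φ.sref_ne_of_mem_posRoots (hI hα) (Φ.posRootsOf_subset I hδI),
    mem_filter.mpr ⟨Φ.sref_mem_posRootsOf hI hα hδI hne, hwδ⟩⟩

lemma exists_mem_reflectionMonoid_apply_not_mem_posRoots {I : Finset V} (hI : I ⊆ Φ.simple) :
    ∃ w ∈ reflectionMonoid I, ∀ δ ∈ Φ.posRootsOf I, w δ ∉ Φ.posRoots := by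
  classical
  obtain ⟨w, hw, hmin⟩ := (measure fun w : V ≃ₗᵢ[ℝ] V =>
    #{δ ∈ Φ.posRootsOf I | w δ ∈ Φ.posRoots}).wf.has_min (reflectionMonoid I) ⟨1, one_mem _⟩
  refine ⟨w, hw, fun δ hδ hwδ => ?_⟩
  obtain ⟨α, hα, hwα⟩ := Φ.exists_simple_apply_mem_posRoots hI hw hδ hwδ
  exact hmin _ (mul_mem hw (Submonoid.subset_closure ⟨α, hα, rfl⟩))
    (Φ.card_filter_mul_srefEquiv_lt hI w hα hwα)

lemma apply_sum_posRootsOf {I : Finset V} (hI : I ⊆ Φ.simple) {w : V ≃ₗᵢ[ℝ] V}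
    (hw : w ∈ reflectionMonoid I) (hneg : ∀ δ ∈ Φ.posRootsOf I, w δ ∉ Φ.posRoots) :
    w (∑ δ ∈ Φ.posRootsOf I, δ) = -∑ δ ∈ Φ.posRootsOf I, δ := by
  have hmaps : Set.MapsTo (fun δ => -w δ) ↑(Φ.posRootsOf I) ↑(Φ.posRootsOf I) := by
    intro δ hδ
    obtain ⟨hr, hspan⟩ := mapsTo_of_mem_reflectionMonoid
      (fun α hα => Φ.mapsTo_sref_roots_inter_span hI hα) hw
      ⟨Φ.posRoots_subset (Φ.posRootsOf_subset I hδ), (Φ.mem_posRootsOf.mp hδ).2⟩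
    exact Φ.mem_posRootsOf.mpr
      ⟨(Φ.mem_posRoots_or_neg_mem hr).resolve_left (hneg δ hδ), neg_mem hspan⟩
  have := sum_comp_of_mapsTo_of_injOn hmaps (neg_injective.comp w.injective).injOn id
  simp only [id, sum_neg_distrib] at this
  rw [map_sum, ← this, neg_neg]

lemma apply_sum_posRoots_sdiff_posRootsOf [DecidableEq V] {I : Finset V} (hI : I ⊆ Φ.simple)
    {w : V ≃ₗᵢ[ℝ] V} (hw : w ∈ reflectionMonoid I) :
    w (∑ β ∈ Φ.posRoots \ Φ.posRootsOf I, β) = ∑ β ∈ Φ.posRoots \ Φ.posRootsOf I, β := by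
  rw [map_sum]
  exact sum_comp_of_mapsTo_of_injOn (mapsTo_of_mem_reflectionMonoid
    (fun α hα => Φ.mapsTo_sref_posRoots_sdiff_posRootsOf hI hα) hw) w.injective.injOn id

lemma apply_two_smul_rhoP_sub_rho [DecidableEq V] {I : Finset V} (hI : I ⊆ Φ.simple)
    {w : V ≃ₗᵢ[ℝ] V} (hw : w ∈ reflectionMonoid I)
    (hneg : ∀ δ ∈ Φ.posRootsOf I, w δ ∉ Φ.posRoots) :
    w ((2 : ℝ) • Φ.rhoP I - Φ.rho) = Φ.rho := by
  rw [rhoP, rho, ← sum_sdiff (Φ.posRootsOf_subset I), map_sub, map_smul, map_smul, map_smul,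
    map_add, Φ.apply_sum_posRoots_sdiff_posRootsOf hI hw, Φ.apply_sum_posRootsOf hI hw hneg]
  module

lemma apply_fundamentalWeight [DecidableEq V] {I : Finset V} (hI : I ⊆ Φ.simple) {ϖ : V → V}
    (hϖ : Φ.IsFundamentalWeights ϖ) {w : V ≃ₗᵢ[ℝ] V} (hw : w ∈ reflectionMonoid I) {μ : V}
    (hμ : μ ∈ Φ.simple \ I) : w (ϖ μ) = ϖ μ := by
  obtain ⟨hμS, hμI⟩ := mem_sdiff.mp hμ
  refine mapsTo_of_mem_reflectionMonoid (s := {ϖ μ}) (fun α hα v hv => ?_) hw rfl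
  rw [Set.mem_singleton_iff] at hv ⊢
  have hμα : μ ≠ α := fun h => hμI (h ▸ hα)
  rw [hv, sref, hϖ μ hμS α (hI hα), if_neg hμα, zero_smul, sub_zero]

lemma cpair_rho_sub_sum_nonneg [DecidableEq V] {ϖ : V → V} (hϖ : Φ.IsFundamentalWeights ϖ)
    {J : Finset V} (hJ : J ⊆ Φ.simple) {β : V} (hβ : β ∈ Φ.posRoots) :
    0 ≤ cpair (Φ.rho - ∑ μ ∈ J, ϖ μ) β := by
  refine (cpair_nonneg_iff (Φ.root_ne_zero (Φ.posRoots_subset hβ)) _).mpr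
    (Φ.inner_nonneg_of_mem_posRoots (fun α hα => ?_) hβ)
  rw [← cpair_nonneg_iff (Φ.root_ne_zero (Φ.simple_subset hα)), cpair_sub_left, Φ.cpair_rho hα,
    cpair_sum_left, sum_congr rfl fun μ hμ => hϖ μ (hJ hμ) α hα, sum_ite_eq']
  split_ifs <;> norm_num

end RCRS

/-- For a proper subset `I ⊂ S` of the simple roots and every positive
root `β ∈ R⁺ \ R_I⁺`, one has `⟨2ρ^P − ρ − Σ_{α ∈ S\I} ϖ_α, β∨⟩ ≥ 0`. -/
theorem klt_flag_ineq {V : Type*} [NormedAddCommGroup V] [InnerProductSpace ℝ V] [DecidableEq V]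
    (Φ : RCRS V)
    (I : Finset V) (hI : I ⊂ Φ.simple)
    (ϖ : V → V) (hϖ : Φ.IsFundamentalWeights ϖ) :
    ∀ β ∈ Φ.posRoots \ Φ.posRootsOf I,
      0 ≤ cpair ((2 : ℝ) • Φ.rhoP I - Φ.rho - ∑ α ∈ Φ.simple \ I, ϖ α) β := by
  intro β hβ
  obtain ⟨w, hw, hneg⟩ := Φ.exists_mem_reflectionMonoid_apply_not_mem_posRoots hI.subset
  have hwβ : w β ∈ Φ.posRoots := (Φ.mem_posRoots_sdiff_posRootsOf.mp
    (mapsTo_of_mem_reflectionMonoid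
      (fun α hα => Φ.mapsTo_sref_posRoots_sdiff_posRootsOf hI.subset hα) hw hβ)).1
  have hwϖ : w (∑ α ∈ Φ.simple \ I, ϖ α) = ∑ α ∈ Φ.simple \ I, ϖ α := by
    rw [map_sum]
    exact sum_congr rfl fun μ hμ => Φ.apply_fundamentalWeight hI.subset hϖ hw hμ
  calc 0 ≤ cpair (Φ.rho - ∑ α ∈ Φ.simple \ I, ϖ α) (w β) :=
        Φ.cpair_rho_sub_sum_nonneg hϖ sdiff_subset hwβ
    _ = cpair (w ((2 : ℝ) • Φ.rhoP I - Φ.rho - ∑ α ∈ Φ.simple \ I, ϖ α)) (w β) := by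
        rw [map_sub, hwϖ, Φ.apply_two_smul_rhoP_sub_rho hI.subset hw hneg]
    _ = _ := cpair_map w.toLinearIsometry _ β
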